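/- For any symmetric Kac–Moody Dynkin diagram Γ and any Weyl group element u with reduced word i, there exists a sign function ε assigning +1 or −1 to each face of the BFZ quiver Q^{u,e} such that the potential S = Σ_F ε(F)·w_F (the signed sum of the faces, i.e., the superpotential 'clockwise faces minus anticlockwise faces') is rigid: every cyclic monomial of Q^{u,e} is cyclically equivalent to an element of the Jacobian ideal J(S). -/

import Mathlib

/-!  Berenstein–Fomin–Zelevinsky quivers `Q^{u,e}` as combinatorial data.

`r` is the number of nodes of the Dynkin diagram `Γ` (a finite simple graph whose
relevant nodes are `1, …, r`), `n` is the length of the reduced word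
`i = (i_1, …, i_n)` for the Weyl group element `u` (and `v = e`, so every letter has
sign `-1`), `node k = i_k` is the node of the letter at position `k` (extended by
`node (-p) = p` for `p = 1, …, r`), and `succ k = k⁺` is the successor map. -/
structure BFZe where
  r : ℤ
  n : ℤ
  Γ : SimpleGraph ℤ
  node : ℤ → ℤ
  succ : ℤ → ℤ

namespace BFZe

variable (S : BFZe)

/-- The index (vertex) set `[-r, -1] ∪ [1, n]`. -/
def Idx (k : ℤ) : Prop := (-S.r ≤ k ∧ k ≤ -1) ∨ (1 ≤ k ∧ k ≤ S.n)

/-- The axioms on the data: `r ≥ 1`, `node (-p) = p`, the nodes of the letters lie in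
`{1, …, r}`, and `succ k` is the least index `l > k` with `node l = node k`, or
`n + 1` if there is no such index. -/
def Valid : Prop :=
  1 ≤ S.r ∧ 0 ≤ S.n ∧
  (∀ p : ℤ, 1 ≤ p → p ≤ S.r → S.node (-p) = p) ∧
  (∀ k : ℤ, 1 ≤ k → k ≤ S.n → 1 ≤ S.node k ∧ S.node k ≤ S.r) ∧
  (∀ k : ℤ, S.Idx k →
    k < S.succ k ∧ S.succ k ≤ S.n + 1 ∧
    (S.succ k ≤ S.n → S.Idx (S.succ k) ∧ S.node (S.succ k) = S.node k) ∧
    (∀ l : ℤ, S.Idx l → k < l → S.node l = S.node k → S.succ k ≤ l))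

open scoped Classical in
/-- The Coxeter matrix of the Weyl group of the symmetric Kac–Moody algebra with
Dynkin diagram `Γ`:  `m_{ab} = 3` if `a` and `b` are adjacent in `Γ` and `m_{ab} = 2`
otherwise (for `a ≠ b`). -/
noncomputable def coxeterMatrix : CoxeterMatrix ℤ where
  M := Matrix.of fun a b : ℤ => if a = b then 1 else if S.Γ.Adj a b then 3 else 2
  isSymm := by
    rw [Matrix.IsSymm]
    ext a b
    by_cases h : a = b
    · simp [h]
    · simp only [Matrix.transpose_apply, Matrix.of_apply, if_neg h, if_neg (Ne.symm h)]
      rw [S.Γ.adj_comm]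
  diagonal := by intro b; simp
  off_diagonal := by
    intro a b h
    simp only [Matrix.of_apply, if_neg h]
    split <;> omega

/-- The word `(i_1, …, i_n)`, as a list of nodes of `Γ`. -/
def word : List ℤ := (List.range S.n.toNat).map (fun j => S.node ((j : ℤ) + 1))

/-- The word `i` is a reduced word (for the Weyl group element `u`) in the Weyl
(Coxeter) group associated to `Γ`. -/
noncomputable def Reduced : Prop :=
  (CoxeterMatrix.toCoxeterSystem S.coxeterMatrix).IsReduced S.word

/-- There is a horizontal arrow from `x` to `y`:  these are the arrows `k⁺ → k` for
`k` in the index set with `k⁺ ≤ n`. -/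
def HorArrow (x y : ℤ) : Prop := S.Idx y ∧ x = S.succ y ∧ x ≤ S.n

/-- There is an inclined arrow from `x` to `y`:  these are the arrows `k → l` with
`|i_k|` and `|i_l|` adjacent in `Γ` and `k < l < k⁺ < l⁺`. -/
def InclArrow (x y : ℤ) : Prop :=
  S.Idx x ∧ S.Idx y ∧ S.Γ.Adj (S.node x) (S.node y) ∧
  x < y ∧ y < S.succ x ∧ S.succ x < S.succ y

/-- The arrows of the BFZ quiver `Q^{u,e}`. -/
def Arrow (x y : ℤ) : Prop := S.HorArrow x y ∨ S.InclArrow x y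

/-- A face of `Q^{u,e}`: a chordless cycle `c : ZMod N → ℤ` (with `N ≥ 3`) of the
underlying undirected graph, i.e. consecutive vertices are joined by an arrow and no
arrow of `Q^{u,e}` joins two non-consecutive vertices. -/
def IsFace {N : ℕ} (c : ZMod N → ℤ) : Prop :=
  3 ≤ N ∧ Function.Injective c ∧
  (∀ t : ZMod N, S.Arrow (c t) (c (t + 1)) ∨ S.Arrow (c (t + 1)) (c t)) ∧
  (∀ s t : ZMod N, s ≠ t → t ≠ s + 1 → s ≠ t + 1 → ¬ S.Arrow (c s) (c t))

/-- `Γ` is the path graph (type `A_r` Dynkin diagram) on `{1, …, r}`. -/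
def IsPathGraph : Prop :=
  ∀ a b : ℤ, S.Γ.Adj a b ↔
    (1 ≤ a ∧ 1 ≤ b ∧ a ≤ S.r ∧ b ≤ S.r ∧ (b = a + 1 ∨ a = b + 1))

/-- The type of arrows of the quiver `Q^{u,e}`. -/
def Arr : Type := { p : ℤ × ℤ // S.Arrow p.1 p.2 }

/-- The source vertex of an arrow. -/
def asrc (e : S.Arr) : ℤ := e.1.1

/-- The target vertex of an arrow. -/
def atgt (e : S.Arr) : ℤ := e.1.2

/-- The product in the free associative `ℂ`-algebra on the arrows corresponding to a
list of arrows (the monomial of a path). -/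
noncomputable def pathProd (L : List S.Arr) : FreeAlgebra ℂ S.Arr :=
  (L.map (FreeAlgebra.ι ℂ)).prod

/-- A list of arrows is a path: consecutive arrows are composable. -/
def IsPathList (L : List S.Arr) : Prop :=
  L.Chain' (fun e f => S.atgt e = S.asrc f)

/-- A nonempty composable list of arrows closing up to a cycle; its monomial
`e_1 ⋯ e_N` is a cyclic monomial. -/
def IsCycList (L : List S.Arr) : Prop :=
  L ≠ [] ∧ S.IsPathList L ∧
  ∀ e ∈ L.head?, ∀ f ∈ L.getLast?, S.atgt f = S.asrc e

/-- The linear span of all `w - rot w` for cyclic monomials `w`; two elements of the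
free algebra are cyclically equivalent iff their difference lies in this span. -/
noncomputable def cycSpan : Submodule ℂ (FreeAlgebra ℂ S.Arr) :=
  Submodule.span ℂ
    {x | ∃ L : List S.Arr, S.IsCycList L ∧ x = S.pathProd L - S.pathProd (L.rotate 1)}

open scoped Classical in
/-- The cyclic derivative with respect to the arrow `a` of the cyclic monomial given
by the list `L = e_1 ⋯ e_N`:  `∑_{j : e_j = a} e_{j+1} ⋯ e_N e_1 ⋯ e_{j-1}`. -/
noncomputable def cycDeriv (a : S.Arr) (L : List S.Arr) : FreeAlgebra ℂ S.Arr :=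
  ∑ j ∈ Finset.range L.length,
    if L[j]? = some a then S.pathProd (L.drop (j + 1) ++ L.take j) else 0

/-- A face of `Q^{u,e}` as a directed cyclic list of arrows: a directed cycle visiting
no vertex twice such that any arrow of `Q^{u,e}` joining two of its vertices is one of
the (cyclically consecutive) arrows of the cycle, i.e. the cycle is chordless in the
underlying undirected graph. -/
def IsFaceList (L : List S.Arr) : Prop :=
  S.IsCycList L ∧ (L.map S.asrc).Nodup ∧
  ∀ x y : ℤ, x ∈ L.map S.asrc → y ∈ L.map S.asrc → S.Arrow x y →
    ∃ e ∈ L, S.asrc e = x ∧ S.atgt e = y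

/-- `FS` is a complete set of representatives of the faces of `Q^{u,e}`, each face
being listed exactly once up to rotation. -/
def FaceReps (FS : Finset (List S.Arr)) : Prop :=
  (∀ L ∈ FS, S.IsFaceList L) ∧
  (∀ L : List S.Arr, S.IsFaceList L → ∃ L' ∈ FS, ∃ j : ℕ, L.rotate j = L') ∧
  (∀ L ∈ FS, ∀ L' ∈ FS, (∃ j : ℕ, L.rotate j = L') → L = L')

/-- The cyclic derivative with respect to the arrow `a` of the potential
`∑_L eps L • w_L`, `L` ranging over the face representatives `FS`. -/
noncomputable def potDeriv (FS : Finset (List S.Arr)) (eps : List S.Arr → ℂ)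
    (a : S.Arr) : FreeAlgebra ℂ S.Arr :=
  ∑ L ∈ FS, eps L • S.cycDeriv a L

/-- The Jacobian ideal of the potential `∑_L eps L • w_L`: the two-sided ideal
generated by its cyclic derivatives. -/
noncomputable def jacIdeal (FS : Finset (List S.Arr)) (eps : List S.Arr → ℂ) :
    Submodule ℂ (FreeAlgebra ℂ S.Arr) :=
  Submodule.span ℂ
    {x | ∃ (p q : FreeAlgebra ℂ S.Arr) (a : S.Arr), x = p * S.potDeriv FS eps a * q}

/-- The quiver with potential `(Q^{u,e}, ∑_L eps L • w_L)` is rigid: every cyclic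
monomial is cyclically equivalent to an element of the Jacobian ideal. -/
def IsRigid (FS : Finset (List S.Arr)) (eps : List S.Arr → ℂ) : Prop :=
  ∀ L : List S.Arr, S.IsCycList L →
    ∃ y ∈ S.jacIdeal FS eps, S.pathProd L - y ∈ S.cycSpan

/-- The data describing the faces of `Q^{u,e}` in the path-graph (type A) case:
`aF L` is the node of the string containing all but one vertex of the face `L`, and
`bF L` is the node of the string containing the remaining lone vertex. -/
def FaceNodes (FS : Finset (List S.Arr)) (aF bF : List S.Arr → ℤ) : Prop :=
  ∀ L ∈ FS,
    S.Γ.Adj (aF L) (bF L) ∧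
    (∀ x ∈ L.map S.asrc, S.node x = aF L ∨ S.node x = bF L) ∧
    (∃! x, x ∈ L.map S.asrc ∧ S.node x = bF L)

/-- The orientation sign `ε(F)` of a face: `+1` if `b(F) > a(F)`, `-1` otherwise. -/
noncomputable def faceEps (aF bF : List S.Arr → ℤ) (L : List S.Arr) : ℂ :=
  if aF L < bF L then 1 else -1

/-! Every cyclic monomial `W` is reduced, modulo the Jacobian ideal and cyclic equivalence, to
cyclic monomials of smaller weight `∑ B ^ (source)`, where `B` exceeds the size of every face.
Rotate `W` so that it starts with the inclined arrow `k → m` of largest source, followed by the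
horizontal walk down the string of `m` until it first drops below `k`, at `a`. This segment `σ`
closed by the inclined arrow `A : a → k` is a face, and every other face through `A` has all its
sources at most `k`. Hence `∂_A S = ε(Aσ) σ + ∑ ε(F) (F without A)`, and multiplying by the rest
of `W` expresses `W` through cyclic monomials of smaller weight. Only the nonvanishing of the
coefficients `ε(F)` is used, so the potential with all signs `+1` is rigid. -/

section Rigidity

theorem exists_eq_append_forall_not_head {α : Type*} (p : α → Prop) [DecidablePred p]
    (l : List α) :
    ∃ u d, l = u ++ d ∧ (∀ f ∈ u, p f) ∧ ∀ g v, d = g :: v → ¬ p g := by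
  refine ⟨l.takeWhile (p ·), l.dropWhile (p ·), List.takeWhile_append_dropWhile.symm,
    fun f hf => by simpa using List.mem_takeWhile_imp hf, fun g v hd => ?_⟩
  have := List.head?_dropWhile_not (p ·) l
  rw [hd] at this
  simpa using this

theorem exists_rotate_cons_eq_append_cons {α : Type*} (a : α) (l : List α) (i : ℕ) :
    ∃ X Y, (a :: l).rotate i = X ++ a :: Y ∧ Y ++ X = l := by
  induction i with
  | zero => exact ⟨[], l, by simp, by simp⟩
  | succ i ih =>
    obtain ⟨X, Y, h, rfl⟩ := ih
    rw [← List.rotate_rotate, h]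
    rcases X with _ | ⟨x, X⟩
    · exact ⟨Y, [], by simp [List.rotate_cons_succ], by simp⟩
    · exact ⟨X, Y ++ [x], by simp [List.rotate_cons_succ], by simp⟩

theorem sum_map_pow_lt_sum_map_pow {α : Type*} (g : α → ℕ) {B d : ℕ} {c σ : List α}
    (hc : ∀ x ∈ c, g x ≤ d) (hlen : c.length < B) {y : α} (hy : y ∈ σ) (hd : d < g y) :
    (c.map fun x => B ^ g x).sum < (σ.map fun x => B ^ g x).sum := by
  have hB : 0 < B := by omega
  calc (c.map fun x => B ^ g x).sum
      ≤ c.length * B ^ d := by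
        have := List.sum_le_card_nsmul (c.map fun x => B ^ g x) (B ^ d) fun x hx => by
          obtain ⟨a, ha, rfl⟩ := List.mem_map.1 hx
          exact Nat.pow_le_pow_right hB (hc a ha)
        rwa [List.length_map, smul_eq_mul] at this
    _ < B ^ (d + 1) := by rw [pow_succ']; exact Nat.mul_lt_mul_of_pos_right hlen (by positivity)
    _ ≤ B ^ g y := Nat.pow_le_pow_right hB hd
    _ ≤ (σ.map fun x => B ^ g x).sum :=
        List.single_le_sum (by simp) _ (List.mem_map_of_mem hy)

variable {S}

theorem Valid.lt_succ (hS : S.Valid) {k : ℤ} (hk : S.Idx k) : k < S.succ k :=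
  (hS.2.2.2.2 k hk).1

theorem Valid.succ_le (hS : S.Valid) {k l : ℤ} (hk : S.Idx k) (hl : S.Idx l) (hkl : k < l)
    (hnode : S.node l = S.node k) : S.succ k ≤ l :=
  (hS.2.2.2.2 k hk).2.2.2 l hl hkl hnode

theorem Valid.neg_r_le (hS : S.Valid) {k : ℤ} (hk : S.Idx k) : -S.r ≤ k := by
  have := hS.1
  rcases hk with ⟨_, _⟩ | ⟨_, _⟩ <;> omega

theorem Valid.le_n (hS : S.Valid) {k : ℤ} (hk : S.Idx k) : k ≤ S.n := by
  have := hS.2.1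
  rcases hk with ⟨_, _⟩ | ⟨_, _⟩ <;> omega

theorem HorArrow.idx_src (hS : S.Valid) {x y : ℤ} (h : S.HorArrow x y) : S.Idx x := by
  obtain ⟨hy, rfl, hx⟩ := h
  exact ((hS.2.2.2.2 y hy).2.2.1 hx).1

theorem HorArrow.node_eq (hS : S.Valid) {x y : ℤ} (h : S.HorArrow x y) :
    S.node x = S.node y := by
  obtain ⟨hy, rfl, hx⟩ := h
  exact ((hS.2.2.2.2 y hy).2.2.1 hx).2

theorem HorArrow.lt (hS : S.Valid) {x y : ℤ} (h : S.HorArrow x y) : y < x :=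
  h.2.1 ▸ hS.lt_succ h.1

theorem Valid.eq_of_lt_succ (hS : S.Valid) {x y : ℤ} (hx : S.Idx x) (hy : S.Idx y)
    (hnode : S.node x = S.node y) (hxy : x ≤ y) (hyx : y < S.succ x) : x = y := by
  by_contra hne
  have := hS.succ_le hx hy (lt_of_le_of_ne hxy hne) hnode.symm
  omega

theorem HorArrow.tgt_eq (hS : S.Valid) {x y y' : ℤ} (h : S.HorArrow x y)
    (h' : S.HorArrow x y') : y = y' := by
  have key : ∀ {z z' : ℤ}, S.HorArrow x z → S.HorArrow x z' → z ≤ z' → z = z' :=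
    fun hz hz' hle => hS.eq_of_lt_succ hz.1 hz'.1
      ((hz.node_eq hS).symm.trans (hz'.node_eq hS)) hle (hz.2.1 ▸ hz'.lt hS)
  rcases le_total y y' with hle | hle
  · exact key h h' hle
  · exact (key h' h hle).symm

theorem InclArrow.node_ne {x y : ℤ} (h : S.InclArrow x y) : S.node x ≠ S.node y :=
  h.2.2.1.ne

theorem InclArrow.lt {x y : ℤ} (h : S.InclArrow x y) : x < y :=
  h.2.2.2.1

theorem Arr.ext_src_tgt {e f : S.Arr} (hs : S.asrc e = S.asrc f) (ht : S.atgt e = S.atgt f) :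
    e = f :=
  Subtype.ext (Prod.ext hs ht)

theorem Arr.idx_src (hS : S.Valid) (e : S.Arr) : S.Idx (S.asrc e) :=
  e.2.elim (fun h => h.idx_src hS) (fun h => h.1)

def IsWalk : ℤ → List S.Arr → ℤ → Prop
  | x, [], y => x = y
  | x, e :: l, y => S.asrc e = x ∧ IsWalk (S.atgt e) l y

@[simp] theorem isWalk_nil {x y : ℤ} : IsWalk x ([] : List S.Arr) y ↔ x = y := Iff.rfl

@[simp] theorem isWalk_cons {x y : ℤ} {e : S.Arr} {l : List S.Arr} :
    IsWalk x (e :: l) y ↔ S.asrc e = x ∧ IsWalk (S.atgt e) l y := Iff.rfl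

theorem isWalk_append {x z : ℤ} {l₁ l₂ : List S.Arr} :
    IsWalk x (l₁ ++ l₂) z ↔ ∃ y, IsWalk x l₁ y ∧ IsWalk y l₂ z := by
  induction l₁ generalizing x with
  | nil => simp
  | cons e l ih => simp [ih, and_assoc]

theorem IsWalk.append {x y z : ℤ} {l₁ l₂ : List S.Arr} (h₁ : IsWalk x l₁ y)
    (h₂ : IsWalk y l₂ z) : IsWalk x (l₁ ++ l₂) z :=
  isWalk_append.2 ⟨y, h₁, h₂⟩

theorem IsWalk.invariant {P : ℤ → Prop} {x y : ℤ} {l : List S.Arr} (hw : IsWalk x l y)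
    (hx : P x) (hP : ∀ f ∈ l, P (S.asrc f) → P (S.atgt f)) :
    P y ∧ ∀ f ∈ l, P (S.asrc f) := by
  induction l generalizing x with
  | nil => exact ⟨hw ▸ hx, by simp⟩
  | cons e l ih =>
    obtain ⟨rfl, hw⟩ := hw
    have he := hP e (by simp) hx
    obtain ⟨hy, hl⟩ := ih hw he fun f hf => hP f (by simp [hf])
    exact ⟨hy, by simpa [hx] using hl⟩

theorem IsWalk.eq_start_or_exists_tgt {x y : ℤ} {l : List S.Arr} (hw : IsWalk x l y) :
    (y = x ∨ ∃ g ∈ l, S.atgt g = y) ∧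
      ∀ f ∈ l, S.asrc f = x ∨ ∃ g ∈ l, S.atgt g = S.asrc f :=
  hw.invariant (P := fun z => z = x ∨ ∃ g ∈ l, S.atgt g = z) (.inl rfl)
    fun f hf _ => .inr ⟨f, hf, rfl⟩

theorem IsWalk.eq_of_ne_nil {x x' y y' : ℤ} {l : List S.Arr} (hl : l ≠ []) (hw : IsWalk x l y)
    (hw' : IsWalk x' l y') : x = x' ∧ y = y' := by
  induction l generalizing x x' with
  | nil => exact absurd rfl hl
  | cons e l ih =>
    obtain ⟨rfl, hw⟩ := hw
    obtain ⟨he, hw'⟩ := hw'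
    rcases eq_or_ne l [] with rfl | hl'
    · exact ⟨he, hw.symm.trans hw'⟩
    · exact ⟨he, (ih hl' hw hw').2⟩

theorem isPathList_iff {l : List S.Arr} :
    S.IsPathList l ↔ l.IsChain (fun e f => S.atgt e = S.asrc f) := Iff.rfl

theorem isWalk_cons_iff {x y : ℤ} {e : S.Arr} {l : List S.Arr} :
    IsWalk x (e :: l) y ↔ S.asrc e = x ∧ S.IsPathList (e :: l) ∧
      S.atgt ((e :: l).getLast (List.cons_ne_nil e l)) = y := by
  induction l generalizing e x with
  | nil => simp [isPathList_iff]
  | cons f l ih =>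
    simp only [isWalk_cons, isPathList_iff, List.isChain_cons_cons,
      List.getLast_cons_cons] at ih ⊢
    rw [ih]
    grind

theorem isCycList_iff {l : List S.Arr} : S.IsCycList l ↔ l ≠ [] ∧ ∃ x, IsWalk x l x := by
  cases l with
  | nil => simp [IsCycList]
  | cons e l =>
    simp only [IsCycList, isWalk_cons_iff, ne_eq, reduceCtorEq, not_false_eq_true, true_and,
      List.head?_cons, Option.mem_def, Option.some.injEq, forall_eq',
      List.getLast?_eq_some_getLast (List.cons_ne_nil e l), exists_eq_left']

theorem IsCycList.rotate {W : List S.Arr} (hW : S.IsCycList W) (n : ℕ) :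
    S.IsCycList (W.rotate n) := by
  obtain ⟨hne, x, hw⟩ := isCycList_iff.1 hW
  refine isCycList_iff.2 ⟨by rwa [Ne, List.rotate_eq_nil_iff], ?_⟩
  rw [← List.take_append_drop (n % W.length) W] at hw
  obtain ⟨y, h₁, h₂⟩ := isWalk_append.1 hw
  exact ⟨y, List.rotate_eq_drop_append_take_mod ▸ h₂.append h₁⟩

theorem IsCycList.isWalk_right {σ v : List S.Arr} (hW : S.IsCycList (σ ++ v)) {x y : ℤ}
    (hσ : IsWalk x σ y) (hne : σ ≠ []) : IsWalk y v x := by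
  obtain ⟨z, hwz⟩ := (isCycList_iff.1 hW).2
  obtain ⟨z', hwσ, hwv⟩ := isWalk_append.1 hwz
  obtain ⟨rfl, rfl⟩ := hσ.eq_of_ne_nil hne hwσ
  exact hwv

def IsHorizontal (l : List S.Arr) : Prop := ∀ f ∈ l, S.HorArrow (S.asrc f) (S.atgt f)

theorem IsHorizontal.of_cons {e : S.Arr} {l : List S.Arr} (h : IsHorizontal (e :: l)) :
    IsHorizontal l :=
  fun f hf => h f (List.mem_cons_of_mem e hf)

section HorizontalWalk

variable {x y : ℤ} {l : List S.Arr}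

theorem IsWalk.node_eq_of_isHorizontal (hS : S.Valid) (hw : IsWalk x l y)
    (hh : IsHorizontal l) : S.node y = S.node x ∧ ∀ f ∈ l, S.node (S.asrc f) = S.node x :=
  hw.invariant (P := fun z => S.node z = S.node x) rfl
    fun f hf hx => ((hh f hf).node_eq hS).symm.trans hx

theorem IsWalk.le_of_isHorizontal (hS : S.Valid) (hw : IsWalk x l y) (hh : IsHorizontal l) :
    y ≤ x ∧ ∀ f ∈ l, S.asrc f ≤ x :=
  hw.invariant (P := (· ≤ x)) le_rfl fun f hf hx => ((hh f hf).lt hS).le.trans hx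

theorem IsWalk.lt_of_isHorizontal (hS : S.Valid) (hw : IsWalk x l y) (hh : IsHorizontal l)
    (hl : l ≠ []) : y < x := by
  obtain ⟨e, l, rfl⟩ := List.exists_cons_of_ne_nil hl
  obtain ⟨rfl, hw⟩ := hw
  exact (hw.le_of_isHorizontal hS hh.of_cons).1.trans_lt ((hh e (by simp)).lt hS)

theorem IsWalk.nodup_src_of_isHorizontal (hS : S.Valid) (hw : IsWalk x l y)
    (hh : IsHorizontal l) : (l.map S.asrc).Nodup := by
  induction l generalizing x with
  | nil => simp
  | cons e l ih =>
    obtain ⟨rfl, hw⟩ := hw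
    have hlt := (hh e (by simp)).lt hS
    have hle := (hw.le_of_isHorizontal hS hh.of_cons).2
    refine List.nodup_cons.2 ⟨fun hmem => ?_, ih hw hh.of_cons⟩
    obtain ⟨f, hf, hfe⟩ := List.mem_map.1 hmem
    exact absurd (hle f hf) (by omega)

theorem IsWalk.eq_of_isHorizontal (hS : S.Valid) {l' : List S.Arr} (hw : IsWalk x l y)
    (hw' : IsWalk x l' y) (hh : IsHorizontal l) (hh' : IsHorizontal l') : l = l' := by
  induction l generalizing x l' with
  | nil =>
    rcases l' with _ | ⟨f, l'⟩
    · rfl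
    · exact ((hw'.lt_of_isHorizontal hS hh' (List.cons_ne_nil f l')).ne' hw).elim
  | cons e l ih =>
    rcases l' with _ | ⟨f, l'⟩
    · exact ((hw.lt_of_isHorizontal hS hh (List.cons_ne_nil e l)).ne' hw').elim
    · obtain ⟨rfl, hw⟩ := hw
      obtain ⟨hfe, hw'⟩ := hw'
      have hef : e = f := Arr.ext_src_tgt hfe.symm
        ((hh e (by simp)).tgt_eq hS (hfe ▸ hh' f (by simp)))
      subst hef
      rw [ih hw hw' hh.of_cons hh'.of_cons]

end HorizontalWalk

/-- `σ` is a face of `Q^{u,e}` with its closing inclined arrow `a → k` removed. -/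
def IsFaceSeg (k m a : ℤ) (σ : List S.Arr) : Prop :=
  ∃ e ch, σ = e :: ch ∧ S.asrc e = k ∧ S.atgt e = m ∧ S.InclArrow k m ∧ IsWalk m ch a ∧
    IsHorizontal ch ∧ (∀ f ∈ ch, k < S.asrc f) ∧ a < k

namespace IsFaceSeg

variable {k m a : ℤ} {σ : List S.Arr}

theorem isWalk (h : IsFaceSeg k m a σ) : IsWalk k σ a := by
  obtain ⟨e, ch, rfl, hk, hm, -, hw, -⟩ := h
  exact ⟨hk, hm ▸ hw⟩

theorem ne_nil (h : IsFaceSeg k m a σ) : σ ≠ [] := by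
  obtain ⟨e, ch, rfl, -⟩ := h
  exact List.cons_ne_nil e ch

theorem src_le (hS : S.Valid) (h : IsFaceSeg k m a σ) : ∀ f ∈ σ, S.asrc f ≤ m := by
  obtain ⟨e, ch, rfl, hk, -, hkm, hw, hh, -⟩ := h
  have := (hw.le_of_isHorizontal hS hh).2
  simp only [List.mem_cons, forall_eq_or_imp, hk]
  exact ⟨hkm.lt.le, this⟩

theorem exists_src_gt (h : IsFaceSeg k m a σ) : ∃ f ∈ σ, k < S.asrc f := by
  obtain ⟨e, ch, rfl, -, -, hkm, hw, -, hgt, hak⟩ := h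
  rcases ch with _ | ⟨f, ch⟩
  · exact absurd hw (hak.trans hkm.lt).ne'
  · exact ⟨f, by simp, hgt f (by simp)⟩

theorem exists_last (h : IsFaceSeg k m a σ) :
    ∃ g ∈ σ, S.atgt g = a ∧ S.HorArrow (S.asrc g) a ∧ k < S.asrc g := by
  obtain ⟨e, ch, rfl, -, -, hkm, hw, hh, hgt, hak⟩ := h
  rcases hw.eq_start_or_exists_tgt.1 with ham | ⟨g, hg, rfl⟩
  · exact absurd ham (hak.trans hkm.lt).ne
  · exact ⟨g, by simp [hg], rfl, hh g hg, hgt g hg⟩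

theorem node_eq (hS : S.Valid) (h : IsFaceSeg k m a σ) : S.node a = S.node m := by
  obtain ⟨e, ch, rfl, -, -, -, hw, hh, -⟩ := h
  exact (hw.node_eq_of_isHorizontal hS hh).1

theorem inclArrow (hS : S.Valid) (h : IsFaceSeg k m a σ) : S.InclArrow a k := by
  obtain ⟨g, hg, -, hga, hkg⟩ := h.exists_last
  have hgm := h.src_le hS g hg
  have hna := h.node_eq hS
  obtain ⟨_, _, -, -, -, ⟨hk, -, hadj, -, hmk, -⟩, -, -, -, hak⟩ := h
  rw [hga.2.1] at hkg hgm
  exact ⟨hga.1, hk, hna ▸ hadj.symm, hak, hkg, by omega⟩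

theorem src_mem (hS : S.Valid) (h : IsFaceSeg k m a σ) {A : S.Arr} (hAs : S.asrc A = a) :
    ∀ x ∈ (A :: σ).map S.asrc, x = a ∨ x = k ∨
      (S.node x = S.node m ∧ k < x ∧ x ≤ m ∧
        (x = m ∨ ∃ f ∈ σ, S.atgt f = x ∧ S.asrc f = S.succ x)) := by
  obtain ⟨e, ch, rfl, hk, -, -, hw, hh, hgt, -⟩ := h
  simp only [List.map_cons, List.mem_cons, List.mem_map, forall_eq_or_imp, hAs, hk, true_or,
    or_true, true_and, forall_exists_index, and_imp, forall_apply_eq_imp_iff₂]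
  intro f hf
  refine .inr (.inr ⟨(hw.node_eq_of_isHorizontal hS hh).2 f hf, hgt f hf,
    (hw.le_of_isHorizontal hS hh).2 f hf, ?_⟩)
  rcases hw.eq_start_or_exists_tgt.2 f hf with hfm | ⟨g, hg, hgf⟩
  · exact .inl hfm
  · exact .inr ⟨g, by simp [hg], hgf, hgf ▸ (hh g hg).2.1⟩

theorem nodup_src (hS : S.Valid) (h : IsFaceSeg k m a σ) {A : S.Arr} (hAs : S.asrc A = a) :
    ((A :: σ).map S.asrc).Nodup := by
  obtain ⟨e, ch, rfl, hk, -, -, hw, hh, hgt, hak⟩ := h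
  simp only [List.map_cons, hAs, hk, List.nodup_cons, List.mem_cons, List.mem_map, not_or,
    not_exists, not_and]
  refine ⟨⟨hak.ne, fun f hf hfa => ?_⟩, fun f hf hfk => ?_,
    hw.nodup_src_of_isHorizontal hS hh⟩
  · have := hgt f hf; omega
  · have := hgt f hf; omega

theorem exists_mem_of_horArrow (hS : S.Valid) (h : IsFaceSeg k m a σ) {A : S.Arr}
    (hAs : S.asrc A = a) {x y : ℤ} (hx : x ∈ (A :: σ).map S.asrc)
    (hy : y ∈ (A :: σ).map S.asrc) (hxy : S.HorArrow x y) :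
    ∃ f ∈ σ, S.asrc f = x ∧ S.atgt f = y := by
  have hmem := h.src_mem hS hAs
  obtain ⟨g, hg, hga, hgh, -⟩ := h.exists_last
  obtain ⟨-, -, -, -, -, hkm, -, -, -, hak⟩ := h
  have hyx := hxy.lt hS
  have hnxy := hxy.node_eq hS
  obtain ⟨-, rfl, -⟩ := hxy
  rcases hmem y hy with rfl | rfl | ⟨-, -, -, rfl | ⟨f, hf, hfy, hfs⟩⟩
  · exact ⟨g, hg, hgh.2.1, hga⟩
  · rcases hmem _ hx with hx | hx | ⟨hnx, -⟩
    · omega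
    · omega
    · exact (hkm.node_ne (hnxy.symm.trans hnx)).elim
  · have := hkm.lt
    rcases hmem _ hx with hx | hx | ⟨-, -, hxm, -⟩ <;> omega
  · exact ⟨f, hf, hfs, hfy⟩

theorem exists_mem_of_inclArrow (hS : S.Valid) (h : IsFaceSeg k m a σ) {A : S.Arr}
    (hAs : S.asrc A = a) (hAt : S.atgt A = k) {x y : ℤ} (hx : x ∈ (A :: σ).map S.asrc)
    (hy : y ∈ (A :: σ).map S.asrc) (hxy : S.InclArrow x y) :
    ∃ f ∈ A :: σ, S.asrc f = x ∧ S.atgt f = y := by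
  have hmem := h.src_mem hS hAs
  have hna := h.node_eq hS
  have hle := h.src_le hS
  obtain ⟨e, ch, rfl, hek, hem, ⟨-, -, -, -, hmk, -⟩, -, -, -, hak⟩ := h
  obtain ⟨-, -, hadj, hxy, -, hsxy⟩ := hxy
  have hne : ∀ {z}, S.node x = S.node z → S.node y = S.node z → False :=
    fun hx hy => hadj.ne (hx.trans hy.symm)
  rcases hmem x hx with rfl | rfl | ⟨hnx, hkx, -⟩
  · rcases hmem y hy with rfl | rfl | ⟨hny, -⟩
    · omega
    · exact ⟨A, by simp, hAs, hAt⟩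
    · exact (hne hna hny).elim
  · rcases hmem y hy with rfl | rfl | ⟨-, -, -, rfl | ⟨f, hf, hfy, hfs⟩⟩
    · omega
    · omega
    · exact ⟨e, by simp, hek, hem⟩
    · have := hle f hf
      omega
  · rcases hmem y hy with rfl | rfl | ⟨hny, -⟩
    · omega
    · omega
    · exact (hne hnx hny).elim

theorem isFaceList (hS : S.Valid) (h : IsFaceSeg k m a σ) {A : S.Arr} (hAs : S.asrc A = a)
    (hAt : S.atgt A = k) : S.IsFaceList (A :: σ) := by
  refine ⟨isCycList_iff.2 ⟨List.cons_ne_nil A σ, a, hAs, hAt ▸ h.isWalk⟩,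
    h.nodup_src hS hAs, fun x y hx hy hxy => hxy.elim (fun hxy => ?_)
      (h.exists_mem_of_inclArrow hS hAs hAt hx hy)⟩
  obtain ⟨f, hf, hfxy⟩ := h.exists_mem_of_horArrow hS hAs hx hy hxy
  exact ⟨f, List.mem_cons_of_mem A hf, hfxy⟩

end IsFaceSeg

theorem InclArrow.tgt_eq (hS : S.Valid) {k m m' : ℤ} (h : S.InclArrow k m)
    (h' : S.InclArrow k m') (hnode : S.node m = S.node m') : m = m' := by
  obtain ⟨-, hm, -, -, hmk, hkm⟩ := h
  obtain ⟨-, hm', -, -, hmk', hkm'⟩ := h'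
  rcases le_total m m' with hle | hle
  · exact hS.eq_of_lt_succ hm hm' hnode hle (by omega)
  · exact (hS.eq_of_lt_succ hm' hm hnode.symm hle (by omega)).symm

theorem IsFaceSeg.unique (hS : S.Valid) {k m m' a : ℤ} {σ σ' : List S.Arr}
    (h : IsFaceSeg k m a σ) (h' : IsFaceSeg k m' a σ') : σ = σ' := by
  have hnode := (h.node_eq hS).symm.trans (h'.node_eq hS)
  obtain ⟨e, ch, rfl, hek, hem, hkm, hw, hh, -⟩ := h
  obtain ⟨e', ch', rfl, hek', hem', hkm', hw', hh', -⟩ := h'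
  obtain rfl := hkm.tgt_eq hS hkm' hnode
  rw [Arr.ext_src_tgt (hek.trans hek'.symm) (hem.trans hem'.symm),
    hw.eq_of_isHorizontal hS hw' hh hh']

theorem exists_isFaceSeg_prefix (hS : S.Valid) {e : S.Arr} {l : List S.Arr}
    (he : S.InclArrow (S.asrc e) (S.atgt e)) (hw : IsWalk (S.atgt e) l (S.asrc e))
    (hmax : ∀ f ∈ l, S.InclArrow (S.asrc f) (S.atgt f) → S.asrc f ≤ S.asrc e) :
    ∃ a ch v, l = ch ++ v ∧ IsFaceSeg (S.asrc e) (S.atgt e) a (e :: ch) := by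
  classical
  set k := S.asrc e
  set m := S.atgt e
  obtain ⟨u, d, rfl, hu, hd⟩ :=
    exists_eq_append_forall_not_head (fun f => S.HorArrow (S.asrc f) (S.atgt f) ∧ k < S.atgt f) l
  obtain ⟨y, hwu, hwd⟩ := isWalk_append.1 hw
  have hhu : IsHorizontal u := fun f hf => (hu f hf).1
  have hky : k < y := (hwu.invariant (P := (k < ·)) he.lt fun f hf _ => (hu f hf).2).1
  obtain ⟨g, v, rfl⟩ := List.exists_cons_of_ne_nil (l := d) (by
    rintro rfl
    exact hky.ne' hwd)
  obtain ⟨hgy, -⟩ := hwd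
  -- `g` starts above `k`, so it is not inclined by the maximality of `k`
  have hg : S.HorArrow (S.asrc g) (S.atgt g) := g.2.resolve_right fun hi =>
    absurd (hmax g (by simp) hi) (by omega)
  have hgk : S.atgt g < k := by
    refine lt_of_le_of_ne (not_lt.1 fun h => hd g v rfl ⟨hg, h⟩) fun hgk => he.node_ne ?_
    rw [← hgk, ← hg.node_eq hS, hgy, (hwu.node_eq_of_isHorizontal hS hhu).1]
  refine ⟨S.atgt g, u ++ [g], v, by simp, e, u ++ [g], rfl, rfl, rfl, he,
    hwu.append ⟨hgy, rfl⟩, ?_, ?_, hgk⟩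
  · exact fun f hf => (List.mem_append.1 hf).elim (hhu f) fun hf => List.mem_singleton.1 hf ▸ hg
  · simp only [List.mem_append, List.mem_singleton]
    rintro f (hf | rfl)
    · exact (hu f hf).2.trans ((hu f hf).1.lt hS)
    · exact hgy ▸ hky

theorem IsCycList.exists_max_src_inclArrow (hS : S.Valid) {W : List S.Arr}
    (hW : S.IsCycList W) : ∃ e ∈ W, S.InclArrow (S.asrc e) (S.atgt e) ∧
      ∀ f ∈ W, S.InclArrow (S.asrc f) (S.atgt f) → S.asrc f ≤ S.asrc e := by
  classical
  obtain ⟨hne, x, hwx⟩ := isCycList_iff.1 hW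
  have hI : W.filter (fun f => S.InclArrow (S.asrc f) (S.atgt f)) ≠ [] := by
    intro h0
    have hh : IsHorizontal W := fun f hf => by
      have : ¬ S.InclArrow (S.asrc f) (S.atgt f) := by
        simpa using List.filter_eq_nil_iff.1 h0 f hf
      exact f.2.resolve_right this
    exact (hwx.lt_of_isHorizontal hS hh hne).false
  obtain ⟨e, he, hmax⟩ := Multiset.exists_max_image S.asrc
    (s := (W.filter fun f => S.InclArrow (S.asrc f) (S.atgt f) : Multiset S.Arr))
    (by simpa using hI)
  simp only [Multiset.mem_coe, List.mem_filter, decide_eq_true_eq, and_imp] at he hmax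
  exact ⟨e, he.1, he.2, hmax⟩

theorem IsCycList.exists_rotate_eq_isFaceSeg_append (hS : S.Valid) {W : List S.Arr}
    (hW : S.IsCycList W) : ∃ (j : ℕ) (k m a : ℤ) (σ v : List S.Arr),
      W.rotate j = σ ++ v ∧ IsFaceSeg k m a σ := by
  obtain ⟨e, heW, he, hmax⟩ := hW.exists_max_src_inclArrow hS
  obtain ⟨x, hwx⟩ := (isCycList_iff.1 hW).2
  obtain ⟨s, t, rfl⟩ := List.append_of_mem heW
  obtain ⟨y, hws, hy, hwt⟩ := isWalk_append.1 hwx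
  obtain ⟨a, ch, v, htv, hσ⟩ := exists_isFaceSeg_prefix hS he (hwt.append (hy ▸ hws))
    fun f hf => hmax f (by simp at hf ⊢; tauto)
  exact ⟨s.length, _, _, a, e :: ch, v, by rw [List.rotate_append_length_eq, List.cons_append,
    htv, List.cons_append], hσ⟩

theorem IsFaceList.nodup {L : List S.Arr} (hL : S.IsFaceList L) : L.Nodup :=
  hL.2.1.of_map _

theorem IsFaceList.exists_rotate_eq (hS : S.Valid) {L : List S.Arr} (hL : S.IsFaceList L) :
    ∃ (j : ℕ) (k m a : ℤ) (σ : List S.Arr) (A : S.Arr),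
      L.rotate j = σ ++ [A] ∧ IsFaceSeg k m a σ ∧ S.asrc A = a ∧ S.atgt A = k := by
  obtain ⟨hcyc, hnd, hchord⟩ := hL
  obtain ⟨j, k, m, a, σ, v, hrot, hσ⟩ := hcyc.exists_rotate_eq_isFaceSeg_append hS
  have hmem : ∀ f, f ∈ σ ++ v → f ∈ L := fun f hf => List.mem_rotate.1 (hrot ▸ hf)
  have hnd' : (σ.map S.asrc ++ v.map S.asrc).Nodup := by
    rw [← List.map_append, ← hrot, List.map_rotate]
    exact List.nodup_rotate.2 hnd
  have hwv := (hrot ▸ hcyc.rotate j : S.IsCycList (σ ++ v)).isWalk_right hσ.isWalk hσ.ne_nil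
  have hak := hσ.inclArrow hS
  obtain ⟨A, v, rfl⟩ := List.exists_cons_of_ne_nil (l := v) (by
    rintro rfl
    exact hak.lt.ne hwv)
  obtain ⟨hAs, hwv⟩ := hwv
  obtain ⟨e, ch, rfl⟩ := List.exists_cons_of_ne_nil hσ.ne_nil
  have hek : S.asrc e = k := hσ.isWalk.1
  -- the chord `a → k` of `L` starts at `a`, as does the first arrow `A` of `v`
  obtain ⟨E, hE, hEs, hEt⟩ := hchord a k (hAs ▸ List.mem_map_of_mem (hmem A (by simp)))
    (hek ▸ List.mem_map_of_mem (hmem e (by simp))) (.inr hak)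
  have hAt : S.atgt A = k := by
    rw [List.inj_on_of_nodup_map hnd (hmem A (by simp)) hE (hAs.trans hEs.symm), hEt]
  obtain rfl : v = [] := by
    rcases v with _ | ⟨g, v⟩
    · rfl
    · exact (List.disjoint_of_nodup_append hnd' (List.mem_map.2 ⟨e, by simp, hek⟩)
        (List.mem_map.2 ⟨g, by simp, hwv.1.trans hAt⟩)).elim
  exact ⟨j, k, m, a, _, A, hrot, hσ, hAs, hAt⟩

theorem IsFaceSeg.rotate_eq_or_src_le (hS : S.Valid) {k m a : ℤ} {σ : List S.Arr}
    (hσ : IsFaceSeg k m a σ) {A : S.Arr} (hAs : S.asrc A = a) (hAt : S.atgt A = k)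
    {L : List S.Arr} (hL : S.IsFaceList L) (hA : A ∈ L) :
    (∃ i, L.rotate i = A :: σ) ∨ ∀ f ∈ L, S.asrc f ≤ k := by
  obtain ⟨j, k', m', a', σ', A', hrot, hσ', hA's, hA't⟩ := hL.exists_rotate_eq hS
  have hmem : ∀ f ∈ L, f ∈ σ' ++ [A'] := fun f hf => hrot ▸ List.mem_rotate.2 hf
  have hak := (hσ.inclArrow hS).lt
  rcases List.mem_append.1 (hmem A hA) with hAσ' | hAA'
  · right
    have hle := hσ'.src_le hS
    obtain ⟨e', ch', rfl, hek', hem', -, -, hh', -, hak'⟩ := hσ'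
    rcases List.mem_cons.1 hAσ' with rfl | hAch
    · intro f hf
      rcases List.mem_append.1 (hmem f hf) with hf | hf
      · have := hle f hf
        omega
      · rw [List.mem_singleton.1 hf, hA's]
        omega
    · exact absurd ((hh' A hAch).lt hS) (by omega)
  · left
    obtain rfl := List.mem_singleton.1 hAA'
    obtain rfl := hA's.symm.trans hAs
    obtain rfl := hA't.symm.trans hAt
    refine ⟨j + σ.length, ?_⟩
    rw [← List.rotate_rotate, hrot, hσ'.unique hS hσ, List.rotate_append_length_eq,
      List.singleton_append]

theorem pathProd_append (X Y : List S.Arr) :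
    S.pathProd (X ++ Y) = S.pathProd X * S.pathProd Y := by
  simp [pathProd]

theorem sub_pathProd_rotate_mem_cycSpan {W : List S.Arr} (hW : S.IsCycList W) (n : ℕ) :
    S.pathProd W - S.pathProd (W.rotate n) ∈ S.cycSpan := by
  induction n with
  | zero => simp
  | succ n ih =>
    have hstep : S.pathProd (W.rotate n) - S.pathProd ((W.rotate n).rotate 1) ∈ S.cycSpan :=
      Submodule.subset_span ⟨W.rotate n, hW.rotate n, rfl⟩
    rw [List.rotate_rotate] at hstep
    simpa using Submodule.add_mem _ ih hstep

theorem cycDeriv_eq_zero {A : S.Arr} {L : List S.Arr} (h : A ∉ L) : S.cycDeriv A L = 0 :=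
  Finset.sum_eq_zero fun _ _ => if_neg fun hj => h (List.mem_of_getElem? hj)

theorem cycDeriv_append_cons {A : S.Arr} {X Y : List S.Arr} (hX : A ∉ X) (hY : A ∉ Y) :
    S.cycDeriv A (X ++ A :: Y) = S.pathProd (Y ++ X) := by
  classical
  rw [cycDeriv, Finset.sum_eq_single_of_mem X.length (by simp)]
  · have hdrop : (X ++ A :: Y).drop (X.length + 1) = Y := by simp
    rw [if_pos (by simp), hdrop, List.take_left' rfl]
  · intro j _ hj
    rw [if_neg]
    intro hA
    rcases lt_or_gt_of_ne hj with hj | hj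
    · exact hX (List.mem_of_getElem? (by rwa [List.getElem?_append_left hj] at hA))
    · obtain ⟨i, rfl⟩ := Nat.exists_eq_add_of_lt hj
      rw [List.getElem?_append_right (by omega), show X.length + i + 1 - X.length = i + 1 by omega,
        List.getElem?_cons_succ] at hA
      exact hY (List.mem_of_getElem? hA)

theorem cycDeriv_rotate_cons {A : S.Arr} {σ : List S.Arr} (hA : A ∉ σ) (i : ℕ) :
    S.cycDeriv A ((A :: σ).rotate i) = S.pathProd σ := by
  obtain ⟨X, Y, h, rfl⟩ := exists_rotate_cons_eq_append_cons A σ i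
  rw [List.mem_append, not_or] at hA
  rw [h, cycDeriv_append_cons hA.2 hA.1]

theorem isRigid_of_forall_mem_sup {FS : Finset (List S.Arr)} {eps : List S.Arr → ℂ}
    (h : ∀ W, S.IsCycList W → S.pathProd W ∈ S.jacIdeal FS eps ⊔ S.cycSpan) :
    S.IsRigid FS eps := by
  intro W hW
  obtain ⟨y, hy, z, hz, hyz⟩ := Submodule.mem_sup.1 (h W hW)
  exact ⟨y, hy, by rwa [← hyz, add_sub_cancel_left]⟩

/-- The base bounds the length of every face (`IsFaceList.length_le`); sources are `≥ -r`, so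
`toNat` does not truncate. -/
def weight (W : List S.Arr) : ℕ :=
  (W.map fun e => (S.n + S.r + 1).toNat ^ (S.asrc e + S.r).toNat).sum

theorem weight_append (X Y : List S.Arr) : weight (X ++ Y) = weight X + weight Y := by
  simp [weight]

theorem IsFaceList.length_le (hS : S.Valid) {L : List S.Arr} (hL : S.IsFaceList L) :
    L.length ≤ (S.n + S.r + 1).toNat := by
  classical
  have hsub : (L.map S.asrc).toFinset ⊆ Finset.Icc (-S.r) S.n := fun x hx => by
    obtain ⟨e, -, rfl⟩ := List.mem_map.1 (List.mem_toFinset.1 hx)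
    exact Finset.mem_Icc.2 ⟨hS.neg_r_le (Arr.idx_src hS e), hS.le_n (Arr.idx_src hS e)⟩
  have := Finset.card_le_card hsub
  rwa [List.toFinset_card_of_nodup hL.2.1, List.length_map, Int.card_Icc,
    show S.n + 1 - -S.r = S.n + S.r + 1 by ring] at this

theorem weight_rotate (W : List S.Arr) (n : ℕ) : weight (W.rotate n) = weight W := by
  rw [weight, weight, List.map_rotate]
  exact (List.rotate_perm _ n).sum_eq

theorem IsFaceSeg.exists_cycDeriv_eq (hS : S.Valid) {k m a : ℤ} {σ v : List S.Arr}
    (hσ : IsFaceSeg k m a σ) (hW : S.IsCycList (σ ++ v)) {A : S.Arr} (hAs : S.asrc A = a)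
    (hAt : S.atgt A = k) {L : List S.Arr} (hL : S.IsFaceList L) (hA : A ∈ L)
    (hle : ∀ f ∈ L, S.asrc f ≤ k) :
    ∃ c, S.cycDeriv A L = S.pathProd c ∧ S.IsCycList (c ++ v) ∧
      weight (c ++ v) < weight (σ ++ v) := by
  have hlen := hL.length_le hS
  have hak := hσ.inclArrow hS
  obtain ⟨X, Y, rfl⟩ := List.append_of_mem hA
  have hnd := List.nodup_middle.1 hL.nodup
  rw [List.nodup_cons, List.mem_append, not_or] at hnd
  obtain ⟨x, hwx⟩ := (isCycList_iff.1 hL.1).2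
  obtain ⟨y, hwX, hy, hwY⟩ := isWalk_append.1 hwx
  have hc : IsWalk k (Y ++ X) a := hAt ▸ hwY.append (hAs ▸ hy ▸ hwX)
  refine ⟨Y ++ X, cycDeriv_append_cons hnd.1.1 hnd.1.2,
    isCycList_iff.2 ⟨fun h => ?_, k, hc.append (hW.isWalk_right hσ.isWalk hσ.ne_nil)⟩, ?_⟩
  · rw [(List.append_eq_nil_iff.1 h).1] at hc
    exact hak.lt.ne' hc
  · obtain ⟨f, hf, hkf⟩ := hσ.exists_src_gt
    have hkr := hS.neg_r_le hak.2.1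
    have := sum_map_pow_lt_sum_map_pow (fun e => (S.asrc e + S.r).toNat)
      (B := (S.n + S.r + 1).toNat) (d := (k + S.r).toNat) (c := Y ++ X)
      (fun e he => by have := hle e (by simp at he ⊢; tauto); omega)
      (by simp at hlen ⊢; omega) hf (by omega)
    rw [weight_append (Y ++ X), weight_append σ]
    exact Nat.add_lt_add_right this _

theorem IsFaceSeg.cycDeriv_mul_mem (hS : S.Valid) {FS : Finset (List S.Arr)}
    (hFS : S.FaceReps FS) {k m a : ℤ} {σ v : List S.Arr} (hσ : IsFaceSeg k m a σ)
    (hW : S.IsCycList (σ ++ v)) {A : S.Arr} (hAs : S.asrc A = a) (hAt : S.atgt A = k) {j : ℕ}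
    (hR : (A :: σ).rotate j ∈ FS) {L : List S.Arr} (hL : L ∈ FS)
    (hLR : L ≠ (A :: σ).rotate j)
    {I : Submodule ℂ (FreeAlgebra ℂ S.Arr)}
    (hI : ∀ W, S.IsCycList W → weight W < weight (σ ++ v) → S.pathProd W ∈ I) :
    S.cycDeriv A L * S.pathProd v ∈ I := by
  by_cases hA : A ∈ L
  · rcases hσ.rotate_eq_or_src_le hS hAs hAt (hFS.1 L hL) hA with ⟨i, hi⟩ | hle
    · exact absurd (hFS.2.2 L hL _ hR ⟨i + j, by rw [← List.rotate_rotate, hi]⟩) hLR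
    · obtain ⟨c, hc, hcyc, hlt⟩ := hσ.exists_cycDeriv_eq hS hW hAs hAt (hFS.1 L hL) hA hle
      rw [hc, ← pathProd_append]
      exact hI _ hcyc hlt
  · simp [cycDeriv_eq_zero hA]

theorem pathProd_mem_jacIdeal_sup_cycSpan (hS : S.Valid) {FS : Finset (List S.Arr)}
    (hFS : S.FaceReps FS) {eps : List S.Arr → ℂ} (heps : ∀ L ∈ FS, eps L ≠ 0)
    {W : List S.Arr} (hW : S.IsCycList W) :
    S.pathProd W ∈ S.jacIdeal FS eps ⊔ S.cycSpan := by
  classical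
  induction hN : weight W using Nat.strong_induction_on generalizing W with
  | _ N ih =>
    obtain ⟨j, k, m, a, σ, v, hrot, hσ⟩ := hW.exists_rotate_eq_isFaceSeg_append hS
    have hWσ : S.IsCycList (σ ++ v) := hrot ▸ hW.rotate j
    obtain ⟨A, hAs, hAt⟩ : ∃ A : S.Arr, S.asrc A = a ∧ S.atgt A = k :=
      ⟨⟨(a, k), .inr (hσ.inclArrow hS)⟩, rfl, rfl⟩
    have hface := hσ.isFaceList hS hAs hAt
    obtain ⟨R, hR, jR, rfl⟩ := hFS.2.1 _ hface
    have hcyc : S.pathProd W - S.pathProd σ * S.pathProd v ∈ S.cycSpan := by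
      rw [← pathProd_append, ← hrot]
      exact sub_pathProd_rotate_mem_cycSpan hW j
    have hother : ∀ L ∈ FS.erase ((A :: σ).rotate jR),
        S.cycDeriv A L * S.pathProd v ∈ S.jacIdeal FS eps ⊔ S.cycSpan := by
      intro L hL
      obtain ⟨hLR, hL⟩ := Finset.mem_erase.1 hL
      exact hσ.cycDeriv_mul_mem hS hFS hWσ hAs hAt hR hL hLR fun W' hW' hlt =>
        ih _ (by rwa [← hN, ← weight_rotate W j, hrot]) hW' rfl
    have hJ : S.potDeriv FS eps A * S.pathProd v ∈ S.jacIdeal FS eps :=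
      Submodule.subset_span ⟨1, S.pathProd v, A, by rw [one_mul]⟩
    have hσv : S.pathProd σ * S.pathProd v = (eps ((A :: σ).rotate jR))⁻¹ •
        (S.potDeriv FS eps A * S.pathProd v -
          ∑ L ∈ FS.erase ((A :: σ).rotate jR), eps L • (S.cycDeriv A L * S.pathProd v)) := by
      rw [potDeriv, ← Finset.add_sum_erase _ _ hR,
        cycDeriv_rotate_cons (List.nodup_cons.1 hface.nodup).1, add_mul, Finset.sum_mul]
      simp_rw [smul_mul_assoc]
      rw [add_sub_cancel_right, inv_smul_smul₀ (heps _ hR)]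
    have hσv_mem : S.pathProd σ * S.pathProd v ∈ S.jacIdeal FS eps ⊔ S.cycSpan := by
      rw [hσv]
      exact Submodule.smul_mem _ _ (sub_mem (Submodule.mem_sup_left hJ)
        (Submodule.sum_mem _ fun L hL => Submodule.smul_mem _ _ (hother L hL)))
    simpa using add_mem (Submodule.mem_sup_right hcyc) hσv_mem

theorem isRigid_of_ne_zero (hS : S.Valid) {FS : Finset (List S.Arr)} (hFS : S.FaceReps FS)
    {eps : List S.Arr → ℂ} (heps : ∀ L ∈ FS, eps L ≠ 0) : S.IsRigid FS eps :=
  isRigid_of_forall_mem_sup fun _ hW => pathProd_mem_jacIdeal_sup_cycSpan hS hFS heps hW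

end Rigidity

theorem exists_rigid_superpotential (hS : S.Valid)
    (FS : Finset (List S.Arr)) (hFS : S.FaceReps FS) :
    ∃ eps : List S.Arr → ℂ,
      (∀ L ∈ FS, eps L = 1 ∨ eps L = -1) ∧ S.IsRigid FS eps :=
  ⟨fun _ => 1, fun _ _ => .inl rfl, isRigid_of_ne_zero hS hFS fun _ _ => one_ne_zero⟩

end BFZe
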